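/- arXiv:2302.06638 — 4 statements merged into one kernel-verified Lean document; each statement's English description precedes it below -/
import Mathlib

section
/- Let E be a nonzero finite-dimensional complex inner product space and T a self-adjoint linear operator on E. Let λk be an eigenvalue of T, let Δ > 0 be such that every eigenvalue μ of T with μ ≠ λk satisfies |μ − λk| ≥ Δ, let 0 < r < 1, and set σ = λk + rΔ. Then T − σ·id is invertible, and for every unit vector b in E one has Re⟨b, (T − σ·id)⁻¹ b⟩ ≥ −1/(rΔ); moreover equality holds if and only if b is an eigenvector of T with eigenvalue λk. In particular the minimum of the shift-inverted expectation value ⟨b, (T − σ·id)⁻¹ b⟩ over unit vectors equals −1/(rΔ) and is attained exactly on the λk-eigenspace. -/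
/-!
Write `A = T - σ` and `y = A⁻¹ b`, so `⟨b, A⁻¹ b⟩ = ⟨A y, y⟩`. Since no eigenvalue of `T` lies
strictly between `λk` and `λk + Δ`, the operator `(T - λk)(T - λk - Δ)` is positive, and writing
`A = (1 - r)(T - λk) + r (T - λk - Δ)` gives `(1 - r)‖(T - λk) y‖² ≤ Re ⟨(T - λk) y, b⟩`.
As `(T - λk) y = b + rΔ y`, the right-hand side is `1 + rΔ Re ⟨b, A⁻¹ b⟩`; it vanishes exactly
when `(T - λk) y = 0`, i.e. when `b = A y` lies in the `λk`-eigenspace.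
-/

open scoped InnerProductSpace

/-- The shift-inverted operator `(T - σ·id)⁻¹` (via `Ring.inverse` in the
endomorphism ring; it equals the actual inverse whenever `T - σ·id` is a unit). -/
noncomputable def shiftInv {E : Type*} [NormedAddCommGroup E] [InnerProductSpace ℂ E]
    (T : E →ₗ[ℂ] E) (σ : ℝ) : E →ₗ[ℂ] E :=
  Ring.inverse (T - (σ : ℂ) • (1 : E →ₗ[ℂ] E))

theorem Module.End.isUnit_sub_smul_one_iff {K V : Type*} [Field K] [AddCommGroup V]
    [Module K V] [FiniteDimensional K V] {f : Module.End K V} {μ : K} :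
    IsUnit (f - μ • (1 : Module.End K V)) ↔ ¬ f.HasEigenvalue μ := by
  rw [Module.End.hasEigenvalue_iff_mem_spectrum, spectrum.notMem_iff, IsUnit.sub_iff,
    Algebra.algebraMap_eq_smul_one]

theorem Module.End.apply_eq_smul_iff_of_sub_smul_one_apply_eq {K V : Type*} [CommRing K]
    [AddCommGroup V] [Module K V] {f : Module.End K V} {c σ : K}
    (hinj : Function.Injective (f - σ • (1 : Module.End K V))) {y b : V}
    (hy : (f - σ • 1) y = b) :
    f b = c • b ↔ f y = c • y := by
  have hcomm : f b - c • b = (f - σ • 1) (f y - c • y) := by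
    rw [← hy]
    simp only [LinearMap.sub_apply, LinearMap.smul_apply, Module.End.one_apply, map_sub,
      map_smul]
  rw [← sub_eq_zero, hcomm, map_eq_zero_iff _ hinj, sub_eq_zero]

namespace LinearMap.IsSymmetric

variable {𝕜 E : Type*} [RCLike 𝕜] [NormedAddCommGroup E] [InnerProductSpace 𝕜 E]
  [FiniteDimensional 𝕜 E] {T : E →ₗ[𝕜] E}

theorem re_inner_sub_smul_one_nonneg (hT : T.IsSymmetric) {a b : ℝ} (hab : a ≤ b)
    (hgap : ∀ μ : ℝ, Module.End.HasEigenvalue T μ → μ ≤ a ∨ b ≤ μ) (y : E) :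
    0 ≤ RCLike.re ⟪(T - (a : 𝕜) • 1) y, (T - (b : 𝕜) • 1) y⟫_𝕜 := by
  set B := hT.eigenvectorBasis rfl
  set μ := hT.eigenvalues rfl
  have hrepr (c : ℝ) (i) :
      B.repr ((T - (c : 𝕜) • 1) y) i = ((μ i - c : ℝ) : 𝕜) * B.repr y i := by
    simp [B, μ, hT.eigenvectorBasis_apply_self_apply, sub_mul, Algebra.smul_def]
  rw [← B.repr.inner_map_map, PiLp.inner_apply, map_sum]
  refine Finset.sum_nonneg fun i _ => ?_
  have hprod : 0 ≤ (μ i - a) * (μ i - b) := by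
    rcases hgap _ (hT.hasEigenvalue_eigenvalues rfl i) with h | h
    · exact mul_nonneg_of_nonpos_of_nonpos (by linarith) (by linarith)
    · exact mul_nonneg (by linarith) (by linarith)
  have hterm : ⟪B.repr ((T - (a : 𝕜) • 1) y) i, B.repr ((T - (b : 𝕜) • 1) y) i⟫_𝕜 =
      (((μ i - a) * (μ i - b) * ‖B.repr y i‖ ^ 2 : ℝ) : 𝕜) := by
    rw [hrepr, hrepr, RCLike.inner_apply, map_mul, RCLike.conj_ofReal, RCLike.ofReal_mul,
      RCLike.ofReal_mul, RCLike.ofReal_pow, ← RCLike.mul_conj]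
    ring
  rw [hterm, RCLike.ofReal_re]
  positivity

theorem mul_norm_sq_le_re_inner_sub_smul_one (hT : T.IsSymmetric) {a Δ r : ℝ} (hΔ : 0 ≤ Δ)
    (hr : 0 ≤ r) (hgap : ∀ μ : ℝ, Module.End.HasEigenvalue T μ → μ ≤ a ∨ a + Δ ≤ μ) (y : E) :
    (1 - r) * ‖(T - (a : 𝕜) • 1) y‖ ^ 2 ≤
      RCLike.re ⟪(T - (a : 𝕜) • 1) y, (T - ((a + r * Δ : ℝ) : 𝕜) • 1) y⟫_𝕜 := by
  have hsplit : (T - ((a + r * Δ : ℝ) : 𝕜) • 1) y =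
      ((1 - r : ℝ) : 𝕜) • (T - (a : 𝕜) • 1) y + (r : 𝕜) • (T - ((a + Δ : ℝ) : 𝕜) • 1) y := by
    simp only [LinearMap.sub_apply, LinearMap.smul_apply, Module.End.one_apply]
    push_cast
    module
  have hpos := hT.re_inner_sub_smul_one_nonneg (by linarith) hgap y
  rw [hsplit, inner_add_right, map_add, inner_smul_right, inner_smul_right, RCLike.re_ofReal_mul,
    RCLike.re_ofReal_mul, inner_self_eq_norm_sq]
  nlinarith

theorem neg_inv_le_re_inner_of_sub_smul_one_apply_eq (hT : T.IsSymmetric) {a Δ r : ℝ}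
    (hΔ : 0 < Δ) (hr0 : 0 < r) (hr1 : r < 1)
    (hgap : ∀ μ : ℝ, Module.End.HasEigenvalue T μ → μ ≤ a ∨ a + Δ ≤ μ)
    (hinj : Function.Injective (T - ((a + r * Δ : ℝ) : 𝕜) • (1 : E →ₗ[𝕜] E)))
    {b y : E} (hb : ‖b‖ = 1) (hy : (T - ((a + r * Δ : ℝ) : 𝕜) • 1) y = b) :
    -(1 / (r * Δ)) ≤ RCLike.re ⟪b, y⟫_𝕜 ∧
      (RCLike.re ⟪b, y⟫_𝕜 = -(1 / (r * Δ)) ↔ T b = (a : 𝕜) • b) := by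
  have hrΔ : 0 < r * Δ := mul_pos hr0 hΔ
  set z := (T - (a : 𝕜) • 1) y
  have hz : z = b + ((r * Δ : ℝ) : 𝕜) • y := by
    rw [← hy]
    simp only [z, LinearMap.sub_apply, LinearMap.smul_apply, Module.End.one_apply]
    push_cast
    module
  have hbz : RCLike.re ⟪b, z⟫_𝕜 = 1 + r * Δ * RCLike.re ⟪b, y⟫_𝕜 := by
    rw [hz, inner_add_right, map_add, inner_smul_right, RCLike.re_ofReal_mul,
      inner_self_eq_norm_sq, hb, one_pow]
  have hbound : (1 - r) * ‖z‖ ^ 2 ≤ RCLike.re ⟪b, z⟫_𝕜 := by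
    rw [← hy, inner_re_symm]
    exact hT.mul_norm_sq_le_re_inner_sub_smul_one hΔ.le hr0.le hgap y
  have hz_zero : RCLike.re ⟪b, z⟫_𝕜 = 0 ↔ z = 0 := by
    refine ⟨fun h => ?_, fun h => by rw [h, inner_zero_right, map_zero]⟩
    have : ‖z‖ ^ 2 ≤ 0 := by nlinarith
    simpa using this
  have hshift : RCLike.re ⟪b, y⟫_𝕜 + 1 / (r * Δ) = RCLike.re ⟪b, z⟫_𝕜 / (r * Δ) := by
    rw [hbz]
    field_simp
    ring
  refine ⟨?_, ?_⟩
  · have : 0 ≤ RCLike.re ⟪b, y⟫_𝕜 + 1 / (r * Δ) := by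
      rw [hshift]
      exact div_nonneg (by nlinarith) hrΔ.le
    linarith
  · rw [eq_neg_iff_add_eq_zero, hshift, div_eq_zero_iff, or_iff_left hrΔ.ne', hz_zero,
      Module.End.apply_eq_smul_iff_of_sub_smul_one_apply_eq hinj hy]
    simp [z, sub_eq_zero]

end LinearMap.IsSymmetric

theorem shift_inversion_minimization_general {E : Type*} [NormedAddCommGroup E]
    [InnerProductSpace ℂ E] [FiniteDimensional ℂ E]
    (T : E →ₗ[ℂ] E) (hT : T.IsSymmetric)
    (lamk Δ r : ℝ)
    (hΔ : 0 < Δ)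
    (hgap : ∀ μ : ℂ, Module.End.HasEigenvalue T μ → μ ≠ (lamk : ℂ) →
      Δ ≤ ‖μ - (lamk : ℂ)‖)
    (hr0 : 0 < r) (hr1 : r < 1)
    (σ : ℝ) (hσ : σ = lamk + r * Δ) :
    IsUnit (T - (σ : ℂ) • (1 : E →ₗ[ℂ] E)) ∧
    ∀ b : E, ‖b‖ = 1 →
      -(1 / (r * Δ)) ≤ (inner ℂ b (shiftInv T σ b) : ℂ).re ∧
      ((inner ℂ b (shiftInv T σ b) : ℂ).re = -(1 / (r * Δ)) ↔ T b = (lamk : ℂ) • b) := by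
  have hspec : ∀ μ : ℝ, Module.End.HasEigenvalue T μ → μ ≤ lamk ∨ lamk + Δ ≤ μ := by
    intro μ hμ
    by_contra! h
    have hle := hgap μ hμ (by exact_mod_cast h.1.ne')
    rw [← Complex.ofReal_sub, Complex.norm_real, Real.norm_eq_abs, abs_of_pos (by linarith)] at hle
    linarith
  have hunit : IsUnit (T - (σ : ℂ) • (1 : E →ₗ[ℂ] E)) :=
    Module.End.isUnit_sub_smul_one_iff.mpr fun h => by
      rcases hspec σ h with h | h <;> nlinarith
  refine ⟨hunit, fun b hb => ?_⟩
  have hy : (T - (σ : ℂ) • 1) (shiftInv T σ b) = b := by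
    rw [← Module.End.mul_apply, shiftInv, Ring.mul_inverse_cancel _ hunit, Module.End.one_apply]
  subst hσ
  exact hT.neg_inv_le_re_inner_of_sub_smul_one_apply_eq hΔ hr0 hr1 hspec
    ((Module.End.isUnit_iff _).mp hunit).injective hb hy

theorem shift_inversion_minimization {E : Type*} [NormedAddCommGroup E]
    [InnerProductSpace ℂ E] [FiniteDimensional ℂ E] [Nontrivial E]
    (T : E →ₗ[ℂ] E) (hT : T.IsSymmetric)
    (lamk Δ r : ℝ)
    (hlam : Module.End.HasEigenvalue T (lamk : ℂ))
    (hΔ : 0 < Δ)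
    (hgap : ∀ μ : ℂ, Module.End.HasEigenvalue T μ → μ ≠ (lamk : ℂ) →
      Δ ≤ ‖μ - (lamk : ℂ)‖)
    (hr0 : 0 < r) (hr1 : r < 1)
    (σ : ℝ) (hσ : σ = lamk + r * Δ) :
    IsUnit (T - (σ : ℂ) • (1 : E →ₗ[ℂ] E)) ∧
    ∀ b : E, ‖b‖ = 1 →
      -(1 / (r * Δ)) ≤ (inner ℂ b (shiftInv T σ b) : ℂ).re ∧
      ((inner ℂ b (shiftInv T σ b) : ℂ).re = -(1 / (r * Δ)) ↔ T b = (lamk : ℂ) • b) :=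
  shift_inversion_minimization_general T hT lamk Δ r hΔ hgap hr0 hr1 σ hσ
end

section
/- Let E be a nonzero finite-dimensional complex inner product space and T a self-adjoint linear operator on E. Let λk be an eigenvalue of T, let Δ > 0 be such that every eigenvalue μ of T with μ ≠ λk satisfies |μ − λk| ≥ Δ, let 0 < r < 1, and set σ = λk − rΔ. Then T − σ·id is invertible, and for every unit vector b in E one has Re⟨b, (T − σ·id)⁻¹ b⟩ ≤ 1/(rΔ); moreover equality holds if and only if b is an eigenvector of T with eigenvalue λk. In particular the maximum of the shift-inverted expectation value ⟨b, (T − σ·id)⁻¹ b⟩ over unit vectors equals 1/(rΔ) and is attained exactly on the λk-eigenspace. -/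
open Module Module.End

section WeightedAverage

variable {ι : Type*} {s : Finset ι} {w p : ι → ℝ} {M : ℝ}

theorem sum_mul_le_mul_sum_of_le (hp : ∀ i ∈ s, 0 ≤ p i) (hw : ∀ i ∈ s, w i ≤ M) :
    ∑ i ∈ s, w i * p i ≤ M * ∑ i ∈ s, p i := by
  rw [Finset.mul_sum]
  exact Finset.sum_le_sum fun i hi => mul_le_mul_of_nonneg_right (hw i hi) (hp i hi)

theorem sum_mul_eq_mul_sum_iff_of_le (hp : ∀ i ∈ s, 0 ≤ p i) (hw : ∀ i ∈ s, w i ≤ M) :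
    ∑ i ∈ s, w i * p i = M * ∑ i ∈ s, p i ↔ ∀ i ∈ s, w i ≠ M → p i = 0 := by
  rw [Finset.mul_sum, Finset.sum_eq_sum_iff_of_le
    fun i hi => mul_le_mul_of_nonneg_right (hw i hi) (hp i hi)]
  refine forall₂_congr fun i _ => ?_
  rw [mul_eq_mul_right_iff, or_iff_not_imp_left]

end WeightedAverage

theorem inv_add_le_inv_of_le_abs {a Δ x : ℝ} (ha : 0 < a) (haΔ : a < Δ)
    (hx : x ≠ 0 → Δ ≤ |x|) : (x + a)⁻¹ ≤ a⁻¹ := by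
  rcases eq_or_ne x 0 with rfl | hx0
  · rw [zero_add]
  rcases le_abs'.mp (hx hx0) with hneg | hpos
  · exact (inv_nonpos.mpr (by linarith)).trans (inv_pos.mpr ha).le
  · exact inv_anti₀ ha (by linarith)

theorem Module.End.isUnit_sub_smul_one_of_not_hasEigenvalue {K V : Type*} [Field K]
    [AddCommGroup V] [Module K V] [FiniteDimensional K V] {f : End K V} {μ : K}
    (h : ¬ f.HasEigenvalue μ) : IsUnit (f - μ • 1) := by
  rw [hasEigenvalue_iff_mem_spectrum, spectrum.mem_iff, not_not, ← IsUnit.neg_iff, neg_sub,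
    Algebra.algebraMap_eq_smul_one] at h
  exact h

namespace OrthonormalBasis

variable {𝕜 E ι : Type*} [RCLike 𝕜] [NormedAddCommGroup E] [InnerProductSpace 𝕜 E] [Fintype ι]

theorem sum_sq_norm_repr (B : OrthonormalBasis ι 𝕜 E) (x : E) :
    ∑ i, ‖B.repr x i‖ ^ 2 = ‖x‖ ^ 2 := by
  simp only [B.repr_apply_apply, B.sum_sq_norm_inner_right]

theorem re_inner_eq_sum_of_repr_eq_mul (B : OrthonormalBasis ι 𝕜 E) {x y : E} {w : ι → ℝ}
    (hy : ∀ i, B.repr y i = w i * B.repr x i) :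
    RCLike.re (inner 𝕜 x y) = ∑ i, w i * ‖B.repr x i‖ ^ 2 := by
  rw [← B.repr.inner_map_map, PiLp.inner_apply, map_sum]
  refine Finset.sum_congr rfl fun i _ => ?_
  rw [hy, RCLike.inner_apply, mul_assoc, RCLike.mul_conj, ← RCLike.ofReal_pow,
    ← RCLike.ofReal_mul, RCLike.ofReal_re]

end OrthonormalBasis

namespace LinearMap.IsSymmetric

variable {𝕜 E : Type*} [RCLike 𝕜] [NormedAddCommGroup E] [InnerProductSpace 𝕜 E]
  [FiniteDimensional 𝕜 E] {T : E →ₗ[𝕜] E} (hT : T.IsSymmetric) {n : ℕ} (hn : finrank 𝕜 E = n)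

theorem eigenvectorBasis_repr_sub_smul_apply (μ : 𝕜) (v : E) (i : Fin n) :
    (hT.eigenvectorBasis hn).repr ((T - μ • 1) v) i =
      (hT.eigenvalues hn i - μ) * (hT.eigenvectorBasis hn).repr v i := by
  simp only [sub_apply, smul_apply, End.one_apply, map_sub, map_smul, PiLp.sub_apply,
    hT.eigenvectorBasis_apply_self_apply, PiLp.smul_apply, smul_eq_mul]
  ring

theorem apply_eq_smul_iff_eigenvectorBasis_repr (μ : ℝ) (v : E) :
    T v = (μ : 𝕜) • v ↔
      ∀ i, hT.eigenvalues hn i ≠ μ → (hT.eigenvectorBasis hn).repr v i = 0 := by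
  have hsub : T v - (μ : 𝕜) • v = (T - (μ : 𝕜) • 1) v := rfl
  rw [← sub_eq_zero, hsub, ← (hT.eigenvectorBasis hn).repr.map_eq_zero_iff, WithLp.ext_iff,
    funext_iff]
  refine forall_congr' fun i => ?_
  rw [hT.eigenvectorBasis_repr_sub_smul_apply, WithLp.ofLp_zero, Pi.zero_apply, mul_eq_zero,
    sub_eq_zero, RCLike.ofReal_inj, or_iff_not_imp_left]

end LinearMap.IsSymmetric

theorem LinearMap.IsSymmetric.eigenvectorBasis_repr_shiftInv_apply {E : Type*}
    [NormedAddCommGroup E] [InnerProductSpace ℂ E] [FiniteDimensional ℂ E] {T : E →ₗ[ℂ] E}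
    (hT : T.IsSymmetric) {n : ℕ} (hn : finrank ℂ E = n) {σ : ℝ} (hσ : ¬ HasEigenvalue T σ)
    (v : E) (i : Fin n) :
    (hT.eigenvectorBasis hn).repr (shiftInv T σ v) i =
      ((hT.eigenvalues hn i - σ)⁻¹ : ℝ) * (hT.eigenvectorBasis hn).repr v i := by
  have hne : (hT.eigenvalues hn i : ℂ) - σ ≠ 0 :=
    sub_ne_zero.mpr fun h => hσ (h ▸ hT.hasEigenvalue_eigenvalues hn i)
  have hv := hT.eigenvectorBasis_repr_sub_smul_apply hn σ (shiftInv T σ v) i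
  rw [shiftInv, ← Module.End.mul_apply, Ring.mul_inverse_cancel _
    (isUnit_sub_smul_one_of_not_hasEigenvalue hσ), Module.End.one_apply] at hv
  rw [hv, Complex.ofReal_inv, Complex.ofReal_sub]
  exact (inv_mul_cancel_left₀ hne _).symm

theorem shift_inversion_maximization_general {E : Type*} [NormedAddCommGroup E]
    [InnerProductSpace ℂ E] [FiniteDimensional ℂ E]
    (T : E →ₗ[ℂ] E) (hT : T.IsSymmetric)
    (lamk Δ r : ℝ)
    (hΔ : 0 < Δ)
    (hgap : ∀ μ : ℂ, Module.End.HasEigenvalue T μ → μ ≠ (lamk : ℂ) →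
      Δ ≤ ‖μ - (lamk : ℂ)‖)
    (hr0 : 0 < r) (hr1 : r < 1)
    (σ : ℝ) (hσ : σ = lamk - r * Δ) :
    IsUnit (T - (σ : ℂ) • (1 : E →ₗ[ℂ] E)) ∧
    ∀ b : E, ‖b‖ = 1 →
      (inner ℂ b (shiftInv T σ b) : ℂ).re ≤ 1 / (r * Δ) ∧
      ((inner ℂ b (shiftInv T σ b) : ℂ).re = 1 / (r * Δ) ↔ T b = (lamk : ℂ) • b) := by
  have hrΔ : 0 < r * Δ := mul_pos hr0 hΔ
  have hrΔ_lt : r * Δ < Δ := mul_lt_of_lt_one_left hΔ hr1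
  have hgap_abs (μ : ℝ) (hμ : HasEigenvalue T μ) : μ - lamk ≠ 0 → Δ ≤ |μ - lamk| := fun hne => by
    simpa [← Complex.ofReal_sub] using hgap μ hμ (mod_cast sub_ne_zero.mp hne)
  have hσ_not : ¬ HasEigenvalue T σ := fun hσ_eig => by
    have := hgap_abs σ hσ_eig (by rw [hσ]; linarith)
    rw [hσ, sub_sub_cancel_left, abs_neg, abs_of_pos hrΔ] at this
    linarith
  refine ⟨isUnit_sub_smul_one_of_not_hasEigenvalue hσ_not, fun b hb => ?_⟩
  set c := (hT.eigenvectorBasis rfl).repr b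
  set lam := hT.eigenvalues (n := finrank ℂ E) rfl
  have hweight (i) : (lam i - σ)⁻¹ = (lam i - lamk + r * Δ)⁻¹ := by rw [hσ]; ring_nf
  have hweight_le (i) (_ : i ∈ Finset.univ) : (lam i - σ)⁻¹ ≤ 1 / (r * Δ) := by
    rw [hweight, one_div]
    exact inv_add_le_inv_of_le_abs hrΔ hrΔ_lt
      (hgap_abs _ (hT.hasEigenvalue_eigenvalues rfl i))
  have hexp : (inner ℂ b (shiftInv T σ b)).re = ∑ i, (lam i - σ)⁻¹ * ‖c i‖ ^ 2 :=
    OrthonormalBasis.re_inner_eq_sum_of_repr_eq_mul _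
      (hT.eigenvectorBasis_repr_shiftInv_apply rfl hσ_not b)
  have hnorm : ∑ i, ‖c i‖ ^ 2 = 1 := by rw [OrthonormalBasis.sum_sq_norm_repr, hb, one_pow]
  have hle := sum_mul_le_mul_sum_of_le (fun i _ => sq_nonneg ‖c i‖) hweight_le
  have heq := sum_mul_eq_mul_sum_iff_of_le (fun i _ => sq_nonneg ‖c i‖) hweight_le
  rw [hnorm, mul_one] at hle heq
  refine ⟨hexp ▸ hle, ?_⟩
  rw [hexp, heq]
  refine Iff.trans ?_ (hT.apply_eq_smul_iff_eigenvectorBasis_repr rfl lamk b).symm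
  refine forall_congr' fun i => ?_
  rw [hweight, one_div, Ne, inv_inj, add_eq_right, sub_eq_zero, sq_eq_zero_iff, norm_eq_zero]
  simp only [Finset.mem_univ, true_imp_iff]
  rfl

theorem shift_inversion_maximization {E : Type*} [NormedAddCommGroup E]
    [InnerProductSpace ℂ E] [FiniteDimensional ℂ E] [Nontrivial E]
    (T : E →ₗ[ℂ] E) (hT : T.IsSymmetric)
    (lamk Δ r : ℝ)
    (hlam : Module.End.HasEigenvalue T (lamk : ℂ))
    (hΔ : 0 < Δ)
    (hgap : ∀ μ : ℂ, Module.End.HasEigenvalue T μ → μ ≠ (lamk : ℂ) →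
      Δ ≤ ‖μ - (lamk : ℂ)‖)
    (hr0 : 0 < r) (hr1 : r < 1)
    (σ : ℝ) (hσ : σ = lamk - r * Δ) :
    IsUnit (T - (σ : ℂ) • (1 : E →ₗ[ℂ] E)) ∧
    ∀ b : E, ‖b‖ = 1 →
      (inner ℂ b (shiftInv T σ b) : ℂ).re ≤ 1 / (r * Δ) ∧
      ((inner ℂ b (shiftInv T σ b) : ℂ).re = 1 / (r * Δ) ↔ T b = (lamk : ℂ) • b) :=
  shift_inversion_maximization_general T hT lamk Δ r hΔ hgap hr0 hr1 σ hσ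
end

section
/- Let E be a finite-dimensional complex inner product space, T a self-adjoint linear operator on E, and σ a real number. Let Δ > 0 and 0 < r < 1, and suppose every eigenvalue μ of T satisfies |μ − σ| ≥ rΔ. Let b be a unit vector, set S = (T − σ·id)⁻¹, x = Sb/‖Sb‖, let x̃ be any unit vector and e any real number. If |e − Re⟨x̃, (T − σ·id) x̃⟩| + |Re⟨x̃, (T − σ·id) x̃⟩ − Re⟨x, (T − σ·id) x⟩| ≤ rΔ/(1 − r), then |⟨b, S b⟩ − ‖Sb‖² · e| ≤ 1/(Δ · r · (1 − r)). -/
/-!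
Write `A = T - σ`. Since `A` is self-adjoint and its eigenvalues lie at distance at least `rΔ`
from `0`, it satisfies `‖A v‖ ≥ rΔ ‖v‖`; hence `A` is invertible and `‖S b‖ ≤ 1 / (rΔ)`. Because
`A (S b) = b`, the cost `⟨b, S b⟩` is `‖S b‖²` times the Rayleigh quotient `⟨x, A x⟩` of the
normalized solution `x`. Its error is therefore at most `(rΔ)⁻²` times the error of `e` as an
estimate of `⟨x, A x⟩`, which the triangle inequality bounds by `rΔ / (1 - r)`.
-/

open Module.End
open scoped InnerProductSpace

section

open RCLike

variable {𝕜 E : Type*} [RCLike 𝕜] [NormedAddCommGroup E] [InnerProductSpace 𝕜 E]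

namespace LinearMap.IsSymmetric

lemma sub_ofReal_smul_one {T : E →ₗ[𝕜] E} (hT : T.IsSymmetric) (σ : ℝ) :
    (T - (σ : 𝕜) • (1 : E →ₗ[𝕜] E)).IsSymmetric :=
  hT.sub (IsSymmetric.id.smul (conj_ofReal σ))

theorem mul_norm_le_norm_apply [FiniteDimensional 𝕜 E] {A : E →ₗ[𝕜] E} (hA : A.IsSymmetric)
    {c : ℝ} (hc : 0 ≤ c) (hgap : ∀ μ : 𝕜, HasEigenvalue A μ → c ≤ ‖μ‖) (v : E) :
    c * ‖v‖ ≤ ‖A v‖ := by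
  set B := hA.eigenvectorBasis rfl
  have hcoord (i) : c * ‖⟪B i, v⟫_𝕜‖ ≤ ‖⟪B i, A v⟫_𝕜‖ := by
    rw [← hA, hA.apply_eigenvectorBasis, inner_smul_left, norm_mul, norm_conj]
    gcongr
    exact hgap _ (hA.hasEigenvalue_eigenvalues rfl i)
  have hsq : (c * ‖v‖) ^ 2 ≤ ‖A v‖ ^ 2 := by
    rw [mul_pow, ← B.sum_sq_norm_inner_right v, ← B.sum_sq_norm_inner_right (A v), Finset.mul_sum]
    gcongr with i
    rw [← mul_pow]
    gcongr
    exact hcoord i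
  exact (pow_le_pow_iff_left₀ (by positivity) (norm_nonneg _) two_ne_zero).mp hsq

end LinearMap.IsSymmetric

theorem Module.End.isUnit_of_forall_hasEigenvalue_le_norm {K V : Type*} [NormedField K]
    [AddCommGroup V] [Module K V] [FiniteDimensional K V] {A : Module.End K V} {c : ℝ} (hc : 0 < c)
    (hgap : ∀ μ : K, HasEigenvalue A μ → c ≤ ‖μ‖) : IsUnit A := by
  by_contra h
  have := hgap 0 (hasEigenvalue_iff_mem_spectrum.mpr ((spectrum.zero_mem_iff K).mpr h))
  rw [norm_zero] at this
  linarith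

theorem Module.End.apply_ringInverse_apply {R M : Type*} [Semiring R] [AddCommMonoid M] [Module R M]
    {A : Module.End R M} (hA : IsUnit A) (y : M) : A (Ring.inverse A y) = y :=
  congrArg (· y) (Ring.mul_inverse_cancel A hA)

theorem norm_sq_mul_re_inner_normalize (A : E →ₗ[𝕜] E) (y : E) :
    ‖y‖ ^ 2 * re ⟪(‖y‖ : 𝕜)⁻¹ • y, A ((‖y‖ : 𝕜)⁻¹ • y)⟫_𝕜 = re ⟪y, A y⟫_𝕜 := by
  rcases eq_or_ne y 0 with rfl | hy
  · simp
  rw [map_smul, inner_smul_left, inner_smul_right, RCLike.conj_inv, conj_ofReal, ← mul_assoc,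
    ← ofReal_inv, ← ofReal_mul, re_ofReal_mul]
  field_simp

end

theorem cost_error_within_distinguishability_general {E : Type*} [NormedAddCommGroup E]
    [InnerProductSpace ℂ E] [FiniteDimensional ℂ E]
    (T : E →ₗ[ℂ] E) (hT : T.IsSymmetric)
    (σ Δ r : ℝ) (hΔ : 0 < Δ) (hr0 : 0 < r)
    (hgap : ∀ μ : ℂ, Module.End.HasEigenvalue T μ → r * Δ ≤ ‖μ - (σ : ℂ)‖)
    (b : E) (hb : ‖b‖ = 1)
    (S : E →ₗ[ℂ] E) (hS : S = Ring.inverse (T - (σ : ℂ) • (1 : E →ₗ[ℂ] E)))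
    (x : E) (hx : x = (‖S b‖ : ℂ)⁻¹ • S b)
    (xt : E) (e : ℝ)
    (herr : |e - (inner ℂ xt ((T - (σ : ℂ) • (1 : E →ₗ[ℂ] E)) xt) : ℂ).re| +
        |(inner ℂ xt ((T - (σ : ℂ) • (1 : E →ₗ[ℂ] E)) xt) : ℂ).re -
          (inner ℂ x ((T - (σ : ℂ) • (1 : E →ₗ[ℂ] E)) x) : ℂ).re| ≤
        r * Δ / (1 - r)) :
    |(inner ℂ b (S b) : ℂ).re - ‖S b‖ ^ 2 * e| ≤ 1 / (Δ * r * (1 - r)) := by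
  set A := T - (σ : ℂ) • (1 : E →ₗ[ℂ] E)
  have hA : A.IsSymmetric := hT.sub_ofReal_smul_one σ
  have hgapA (μ : ℂ) (hμ : HasEigenvalue A μ) : r * Δ ≤ ‖μ‖ := by
    simpa using hgap (μ + σ) (hasEigenvalue_sub_iff.mp hμ)
  have hrΔ : 0 < r * Δ := mul_pos hr0 hΔ
  have hASb : A (S b) = b :=
    hS ▸ apply_ringInverse_apply (isUnit_of_forall_hasEigenvalue_le_norm hrΔ hgapA) b
  have hSb : r * Δ * ‖S b‖ ≤ 1 := by
    have h := hA.mul_norm_le_norm_apply hrΔ.le hgapA (S b)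
    rwa [hASb, hb] at h
  have hcost : (inner ℂ b (S b) : ℂ).re = ‖S b‖ ^ 2 * (inner ℂ x (A x) : ℂ).re := by
    have h := norm_sq_mul_re_inner_normalize A (S b)
    rw [hASb, inner_re_symm (S b) b] at h
    rw [hx]
    exact h.symm
  have hest : |(inner ℂ x (A x) : ℂ).re - e| ≤ r * Δ / (1 - r) :=
    abs_sub_comm e _ ▸ (abs_sub_le e (inner ℂ xt (A xt) : ℂ).re _).trans herr
  rw [hcost, ← mul_sub, abs_mul, abs_sq]
  calc ‖S b‖ ^ 2 * |(inner ℂ x (A x) : ℂ).re - e|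
      ≤ (1 / (r * Δ)) ^ 2 * (r * Δ / (1 - r)) := by
        gcongr
        rwa [le_div_iff₀ hrΔ, mul_comm]
    _ = 1 / (Δ * r * (1 - r)) := by field_simp

theorem cost_error_within_distinguishability {E : Type*} [NormedAddCommGroup E]
    [InnerProductSpace ℂ E] [FiniteDimensional ℂ E]
    (T : E →ₗ[ℂ] E) (hT : T.IsSymmetric)
    (σ Δ r : ℝ) (hΔ : 0 < Δ) (hr0 : 0 < r) (hr1 : r < 1)
    (hgap : ∀ μ : ℂ, Module.End.HasEigenvalue T μ → r * Δ ≤ ‖μ - (σ : ℂ)‖)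
    (b : E) (hb : ‖b‖ = 1)
    (S : E →ₗ[ℂ] E) (hS : S = Ring.inverse (T - (σ : ℂ) • (1 : E →ₗ[ℂ] E)))
    (x : E) (hx : x = (‖S b‖ : ℂ)⁻¹ • S b)
    (xt : E) (hxt : ‖xt‖ = 1) (e : ℝ)
    (herr : |e - (inner ℂ xt ((T - (σ : ℂ) • (1 : E →ₗ[ℂ] E)) xt) : ℂ).re| +
        |(inner ℂ xt ((T - (σ : ℂ) • (1 : E →ₗ[ℂ] E)) xt) : ℂ).re -
          (inner ℂ x ((T - (σ : ℂ) • (1 : E →ₗ[ℂ] E)) x) : ℂ).re| ≤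
        r * Δ / (1 - r)) :
    |(inner ℂ b (S b) : ℂ).re - ‖S b‖ ^ 2 * e| ≤ 1 / (Δ * r * (1 - r)) :=
  cost_error_within_distinguishability_general T hT σ Δ r hΔ hr0 hgap b hb S hS x hx xt e herr
end

section
/- Let E be a finite-dimensional complex inner product space, M a self-adjoint linear operator on E with operator norm ‖M‖, and ψ, φ unit vectors in E. Then |Re⟨ψ, M ψ⟩ − Re⟨φ, M φ⟩| ≤ 2 · ‖M‖ · √(1 − |⟨ψ, φ⟩|²). -/
/-! Since `M` is symmetric, `Re⟪x, M x⟫ - Re⟪y, M y⟫ = Re⟪x + y, M (x - y)⟫`, which is at most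
`‖M‖ ‖x + y‖ ‖x - y‖`; for unit vectors `‖x + y‖ ‖x - y‖ = 2 √(1 - (Re⟪x, y⟫)²)`.
Multiplying `φ` by a phase changes neither its norm nor its expectation value, and makes
`⟪ψ, φ⟫` real and nonnegative, i.e. equal to `‖⟪ψ, φ⟫‖`. -/

open RCLike

open scoped InnerProductSpace ComplexConjugate

section

variable {𝕜 E : Type*} [RCLike 𝕜] [NormedAddCommGroup E] [InnerProductSpace 𝕜 E]

theorem LinearMap.IsSymmetric.re_inner_map_self_sub {T : E →ₗ[𝕜] E} (hT : T.IsSymmetric)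
    (x y : E) : re ⟪x, T x⟫_𝕜 - re ⟪y, T y⟫_𝕜 = re ⟪x + y, T (x - y)⟫_𝕜 := by
  have h_cross : re ⟪y, T x⟫_𝕜 = re ⟪x, T y⟫_𝕜 := by
    rw [← inner_conj_symm, hT, conj_re]
  rw [map_sub, inner_add_left, inner_sub_right, inner_sub_right, map_add, map_sub, map_sub,
    h_cross]
  ring

theorem abs_re_inner_map_self_sub_le {T : E →L[𝕜] E} (hT : (T : E →ₗ[𝕜] E).IsSymmetric)
    (x y : E) :
    |re ⟪x, T x⟫_𝕜 - re ⟪y, T y⟫_𝕜| ≤ ‖T‖ * (‖x + y‖ * ‖x - y‖) :=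
  calc |re ⟪x, T x⟫_𝕜 - re ⟪y, T y⟫_𝕜| = |re ⟪x + y, T (x - y)⟫_𝕜| :=
        congrArg abs (hT.re_inner_map_self_sub x y)
    _ ≤ ‖x + y‖ * ‖T (x - y)‖ := (abs_re_le_norm _).trans (norm_inner_le_norm _ _)
    _ ≤ ‖x + y‖ * (‖T‖ * ‖x - y‖) := by gcongr; exact T.le_opNorm _
    _ = ‖T‖ * (‖x + y‖ * ‖x - y‖) := by ring

theorem norm_add_mul_norm_sub_of_norm_eq_one {x y : E} (hx : ‖x‖ = 1) (hy : ‖y‖ = 1) :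
    ‖x + y‖ * ‖x - y‖ = 2 * √(1 - re ⟪x, y⟫_𝕜 ^ 2) := by
  have h_sq : (‖x + y‖ * ‖x - y‖) ^ 2 = (2 * √(1 - re ⟪x, y⟫_𝕜 ^ 2)) ^ 2 := by
    have h_re : re ⟪x, y⟫_𝕜 ^ 2 ≤ 1 := by
      rw [sq_le_one_iff_abs_le_one]
      calc |re ⟪x, y⟫_𝕜| ≤ ‖x‖ * ‖y‖ := (abs_re_le_norm _).trans (norm_inner_le_norm x y)
        _ = 1 := by rw [hx, hy, one_mul]
    rw [mul_pow, mul_pow, @norm_add_sq 𝕜, @norm_sub_sq 𝕜, Real.sq_sqrt (by linarith), hx, hy]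
    ring
  exact (pow_left_inj₀ (by positivity) (by positivity) two_ne_zero).mp h_sq

theorem inner_smul_map_smul_of_norm_eq_one (T : E →ₗ[𝕜] E) {c : 𝕜} (hc : ‖c‖ = 1) (x : E) :
    ⟪c • x, T (c • x)⟫_𝕜 = ⟪x, T x⟫_𝕜 := by
  rw [map_smul, inner_smul_left, inner_smul_right, ← mul_assoc, RCLike.conj_mul, hc]
  simp

theorem exists_norm_eq_one_inner_smul_eq_norm (x y : E) :
    ∃ c : 𝕜, ‖c‖ = 1 ∧ ⟪x, c • y⟫_𝕜 = ‖⟪x, y⟫_𝕜‖ := by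
  obtain ⟨c, hc, hc_mul⟩ := exists_norm_mul_eq_self ⟪x, y⟫_𝕜
  refine ⟨conj c, by rwa [norm_conj], ?_⟩
  rw [inner_smul_right]
  conv_lhs => rw [← hc_mul]
  rw [← mul_assoc, RCLike.conj_mul, hc]
  simp

end

theorem expectation_difference_fidelity_bound {E : Type*} [NormedAddCommGroup E]
    [InnerProductSpace ℂ E] [FiniteDimensional ℂ E]
    (M : E →ₗ[ℂ] E) (hM : M.IsSymmetric)
    (ψ φ : E) (hψ : ‖ψ‖ = 1) (hφ : ‖φ‖ = 1) :
    |(inner ℂ ψ (M ψ) : ℂ).re - (inner ℂ φ (M φ) : ℂ).re| ≤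
      2 * ‖LinearMap.toContinuousLinearMap M‖ *
        Real.sqrt (1 - ‖(inner ℂ ψ φ : ℂ)‖ ^ 2) := by
  obtain ⟨c, hc, h_phase⟩ := exists_norm_eq_one_inner_smul_eq_norm (𝕜 := ℂ) ψ φ
  have hφc : ‖c • φ‖ = 1 := by rw [norm_smul, hc, hφ, one_mul]
  have h_fid : re ⟪ψ, c • φ⟫_ℂ = ‖⟪ψ, φ⟫_ℂ‖ := by rw [h_phase, ofReal_re]
  have h_bound :=
    abs_re_inner_map_self_sub_le (T := LinearMap.toContinuousLinearMap M) hM ψ (c • φ)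
  rw [LinearMap.coe_toContinuousLinearMap', inner_smul_map_smul_of_norm_eq_one M hc,
    norm_add_mul_norm_sub_of_norm_eq_one (𝕜 := ℂ) hψ hφc, h_fid, re_to_complex,
    re_to_complex] at h_bound
  linarith
end
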